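/- arXiv:2605.24200 — 5 statements merged into one kernel-verified Lean document; each statement's English description precedes it below -/
import Mathlib

section
/- There exists a constant C > 0 such that for every ε ∈ (0, 1/2] and every x ∈ ℝ³ ∖ {0}, the Landau velocity field satisfies ‖U^ε(x)‖ ≤ C ε / |x|. -/
noncomputable section

/-- Euclidean 3-space. -/
abbrev E3 := EuclideanSpace ℝ (Fin 3)

/-- The vertical unit vector `(0,0,1)`. -/
def e3 : E3 := EuclideanSpace.single 2 1

/-- The Landau velocity field `U^ε` in Cartesian form (with `r = |x|`, `σ = x₃/r`). -/
def landauU (ε : ℝ) (x : E3) : E3 :=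
  ((2 / ‖x‖) * ((1 - ε ^ 2) / (1 - ε * (x 2 / ‖x‖)) ^ 2 - 1)) • (‖x‖⁻¹ • x)
    - (2 * ε / (1 - ε * (x 2 / ‖x‖))) •
        (((x 2 / ‖x‖) / ‖x‖ ^ 2) • (x - (x 2) • e3)
          - ((1 - (x 2 / ‖x‖) ^ 2) / ‖x‖) • e3)

/-- For small parameter `ε` the Landau velocity field satisfies `‖U^ε(x)‖ ≤ C ε/|x|`. -/
theorem landau_smallness :
    ∃ C : ℝ, 0 < C ∧ ∀ ε ∈ Set.Ioc (0 : ℝ) (1 / 2), ∀ x : E3, x ≠ 0 →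
      ‖landauU ε x‖ ≤ C * ε / ‖x‖ := by
  refine ⟨44, by norm_num, ?_⟩
  rintro ε ⟨hε0, hε2⟩ x hx
  have hr : 0 < ‖x‖ := norm_pos_iff.mpr hx
  have hx2 : |x 2| ≤ ‖x‖ := by
    have h1 : (x 2) ^ 2 ≤ ∑ i, (x i) ^ 2 := by
      refine Finset.single_le_sum (f := fun i => (x i) ^ 2) (fun i _ => sq_nonneg _) (Finset.mem_univ 2)
    have h2 : ‖x‖ = Real.sqrt (∑ i, (x i) ^ 2) := by
      rw [EuclideanSpace.norm_eq]
      congr 1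
      exact Finset.sum_congr rfl (fun i _ => by rw [Real.norm_eq_abs, sq_abs])
    rw [h2, ← Real.sqrt_sq_eq_abs]
    exact Real.sqrt_le_sqrt h1
  set r := ‖x‖ with hrdef
  set σ := x 2 / r with hσdef
  have hσ : |σ| ≤ 1 := by
    rw [hσdef, abs_div, abs_of_pos hr]
    exact div_le_one_of_le₀ hx2 hr.le
  have hσ1 : -1 ≤ σ := (abs_le.mp hσ).1
  have hσ2 : σ ≤ 1 := (abs_le.mp hσ).2
  have hd : (1:ℝ)/2 ≤ 1 - ε * σ := by nlinarith [abs_le.mp hσ]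
  have hd0 : (0:ℝ) < 1 - ε * σ := by linarith
  have he3 : ‖e3‖ = 1 := by
    rw [e3, EuclideanSpace.norm_single]; norm_num
  have hv1 : ‖r⁻¹ • x‖ = 1 := by
    rw [norm_smul, norm_inv, norm_norm, ← hrdef]
    field_simp
  -- bound on first scalar
  have hc1 : |(2 / r) * ((1 - ε ^ 2) / (1 - ε * σ) ^ 2 - 1)| ≤ 32 * ε / r := by
    have hne : (1 - ε * σ) ≠ 0 := ne_of_gt hd0
    have heq : (1 - ε ^ 2) / (1 - ε * σ) ^ 2 - 1
        = ε * (2 * σ - ε - ε * σ ^ 2) / (1 - ε * σ) ^ 2 := by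
      field_simp
      ring
    have habs : |ε * (2 * σ - ε - ε * σ ^ 2) / (1 - ε * σ) ^ 2|
        = ε * |2 * σ - ε - ε * σ ^ 2| / (1 - ε * σ) ^ 2 := by
      rw [abs_div, abs_mul, abs_of_pos hε0, abs_of_pos (pow_pos hd0 2)]
    rw [heq, abs_mul, habs, abs_div, abs_two, abs_of_pos hr]
    have hN : |2 * σ - ε - ε * σ ^ 2| ≤ 4 := by
      rw [abs_le]; constructor <;> nlinarith [sq_nonneg σ]
    have hfrac : ε * |2 * σ - ε - ε * σ ^ 2| / (1 - ε * σ) ^ 2 ≤ 16 * ε := by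
      rw [div_le_iff₀ (pow_pos hd0 2)]
      have hd2 : (1:ℝ)/4 ≤ (1 - ε * σ) ^ 2 := by nlinarith
      nlinarith [mul_le_mul_of_nonneg_left hN hε0.le, mul_le_mul_of_nonneg_left hd2 hε0.le]
    calc 2 / r * (ε * |2 * σ - ε - ε * σ ^ 2| / (1 - ε * σ) ^ 2)
        ≤ 2 / r * (16 * ε) := mul_le_mul_of_nonneg_left hfrac (by positivity)
      _ = 32 * ε / r := by ring
  -- bound on second scalar
  have hc2 : |2 * ε / (1 - ε * σ)| ≤ 4 * ε := by
    rw [abs_div, abs_of_pos hd0, abs_mul, abs_two, abs_of_pos hε0,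
      div_le_iff₀ hd0]
    nlinarith
  -- bound on inner vector
  have hu : ‖x - (x 2) • e3‖ ≤ 2 * r := by
    calc ‖x - (x 2) • e3‖ ≤ ‖x‖ + ‖(x 2) • e3‖ := norm_sub_le _ _
      _ = r + |x 2| := by rw [norm_smul, he3, Real.norm_eq_abs, mul_one]
      _ ≤ 2 * r := by linarith
  have hw : ‖(σ / r ^ 2) • (x - (x 2) • e3) - ((1 - σ ^ 2) / r) • e3‖ ≤ 3 / r := by
    have a1 : |σ / r ^ 2| ≤ 1 / r ^ 2 := by
      rw [abs_div, abs_of_pos (pow_pos hr 2)]; gcongr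
    have a2 : |(1 - σ ^ 2) / r| ≤ 1 / r := by
      rw [abs_div, abs_of_pos hr]
      have : |1 - σ ^ 2| ≤ 1 := by rw [abs_le]; constructor <;> nlinarith
      gcongr
    calc ‖(σ / r ^ 2) • (x - (x 2) • e3) - ((1 - σ ^ 2) / r) • e3‖
        ≤ ‖(σ / r ^ 2) • (x - (x 2) • e3)‖ + ‖((1 - σ ^ 2) / r) • e3‖ := norm_sub_le _ _
      _ = |σ / r ^ 2| * ‖x - (x 2) • e3‖ + |(1 - σ ^ 2) / r| := by
          rw [norm_smul, norm_smul, he3, mul_one, Real.norm_eq_abs, Real.norm_eq_abs]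
      _ ≤ 1 / r ^ 2 * (2 * r) + 1 / r := by
          have := mul_le_mul a1 hu (norm_nonneg _) (by positivity : (0:ℝ) ≤ 1 / r ^ 2)
          linarith
      _ = 3 / r := by field_simp; ring
  -- assemble
  have hU : landauU ε x
      = ((2 / r) * ((1 - ε ^ 2) / (1 - ε * σ) ^ 2 - 1)) • (r⁻¹ • x)
        - (2 * ε / (1 - ε * σ)) •
            ((σ / r ^ 2) • (x - (x 2) • e3) - ((1 - σ ^ 2) / r) • e3) := by
    rw [landauU]
  have b1 : ‖((2 / r) * ((1 - ε ^ 2) / (1 - ε * σ) ^ 2 - 1)) • (r⁻¹ • x)‖ ≤ 32 * ε / r := by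
    rw [norm_smul, hv1, mul_one, Real.norm_eq_abs]; exact hc1
  have b2 : ‖(2 * ε / (1 - ε * σ)) •
      ((σ / r ^ 2) • (x - (x 2) • e3) - ((1 - σ ^ 2) / r) • e3)‖ ≤ 4 * ε * (3 / r) := by
    rw [norm_smul, Real.norm_eq_abs]
    exact mul_le_mul hc2 hw (norm_nonneg _) (by positivity)
  have hsum : 32 * ε / r + 4 * ε * (3 / r) = 44 * ε / r := by field_simp; ring
  rw [hU]
  calc ‖_ - _‖ ≤ _ + _ := norm_sub_le _ _
    _ ≤ 32 * ε / r + 4 * ε * (3 / r) := add_le_add b1 b2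
    _ = 44 * ε / r := hsum
end
end

section
/- Let ε ∈ (−1,1) and c ∈ ℝ, and define g : (−1,1) → ℝ by g(t) = c/(1−εt)². Then g solves the linearized pure-swirl eigenvalue ODE: for every t ∈ (−1,1), −(1−t²)g''(t) + 4t g'(t) + (2ε(1−t²)/(1−εt))·g'(t) + (−4εt/(1−εt) − 2(1−ε²)/(1−εt)² + 2)·g(t) = 0. -/
/-! Since `1 - εt ≠ 0` on `(-1,1)`, the derivatives of `c/(1-εt)²` are `2cε/(1-εt)³` and
`6cε²/(1-εt)⁴`; substituting them and clearing the denominators `(1-εt)⁴` turns the equation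
into a polynomial identity. -/

section OneSubMulPow

variable (c ε : ℝ) (n : ℕ)

theorem hasDerivAt_const_div_one_sub_mul_pow {s : ℝ} (hs : 1 - ε * s ≠ 0) :
    HasDerivAt (fun s : ℝ => c / (1 - ε * s) ^ n) (c * n * ε / (1 - ε * s) ^ (n + 1)) s := by
  have hlin : HasDerivAt (fun s : ℝ => 1 - ε * s) (-ε) s := by
    simpa using ((hasDerivAt_id s).const_mul ε).const_sub 1
  refine ((hasDerivAt_const s c).div (hlin.pow n) (pow_ne_zero n hs)).congr_deriv ?_
  rcases n with _ | n
  · simp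
  · simp only [Pi.pow_apply, Nat.add_sub_cancel]
    field_simp
    ring

theorem deriv_const_div_one_sub_mul_pow {s : ℝ} (hs : 1 - ε * s ≠ 0) :
    deriv (fun s : ℝ => c / (1 - ε * s) ^ n) s = c * n * ε / (1 - ε * s) ^ (n + 1) :=
  (hasDerivAt_const_div_one_sub_mul_pow c ε n hs).deriv

theorem deriv_deriv_const_div_one_sub_mul_pow {t : ℝ} (ht : 1 - ε * t ≠ 0) :
    deriv (deriv fun s : ℝ => c / (1 - ε * s) ^ n) t
      = c * n * (n + 1) * ε ^ 2 / (1 - ε * t) ^ (n + 2) := by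
  have hnear : ∀ᶠ s in nhds t, 1 - ε * s ≠ 0 :=
    (show ContinuousAt (fun s : ℝ => 1 - ε * s) t by fun_prop).eventually_ne ht
  have hderiv : deriv (fun s : ℝ => c / (1 - ε * s) ^ n)
      =ᶠ[nhds t] fun s => c * n * ε / (1 - ε * s) ^ (n + 1) :=
    hnear.mono fun s hs => deriv_const_div_one_sub_mul_pow c ε n hs
  rw [hderiv.deriv_eq, deriv_const_div_one_sub_mul_pow (c * n * ε) ε (n + 1) ht]
  push_cast
  ring

end OneSubMulPow

theorem one_sub_mul_ne_zero_of_mem_Ioo {ε t : ℝ} (hε : ε ∈ Set.Ioo (-1 : ℝ) 1)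
    (ht : t ∈ Set.Ioo (-1 : ℝ) 1) : 1 - ε * t ≠ 0 := by
  have hlt : |ε * t| < 1 := by
    rw [abs_mul]
    exact mul_lt_one_of_nonneg_of_lt_one_left (abs_nonneg ε) (abs_lt.mpr hε) (abs_lt.mpr ht).le
  linarith [le_abs_self (ε * t)]

/-- The explicit regular solution `g(t) = c/(1−εt)²` solves the linearized pure-swirl
eigenvalue ODE
`−(1−t²)g'' + 4t g' + (2ε(1−t²)/(1−εt)) g' + (−4εt/(1−εt) − 2(1−ε²)/(1−εt)² + 2) g = 0`
on `(−1,1)`. -/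
theorem pure_swirl_ODE_solution (ε : ℝ) (hε : ε ∈ Set.Ioo (-1 : ℝ) 1) (c : ℝ) :
    ∀ t ∈ Set.Ioo (-1 : ℝ) 1,
      -(1 - t ^ 2) * deriv (deriv (fun s : ℝ => c / (1 - ε * s) ^ 2)) t
        + 4 * t * deriv (fun s : ℝ => c / (1 - ε * s) ^ 2) t
        + (2 * ε * (1 - t ^ 2) / (1 - ε * t)) * deriv (fun s : ℝ => c / (1 - ε * s) ^ 2) t
        + (-4 * ε * t / (1 - ε * t) - 2 * (1 - ε ^ 2) / (1 - ε * t) ^ 2 + 2)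
            * (c / (1 - ε * t) ^ 2) = 0 := by
  intro t ht
  have hne := one_sub_mul_ne_zero_of_mem_Ioo hε ht
  rw [deriv_deriv_const_div_one_sub_mul_pow c ε 2 hne, deriv_const_div_one_sub_mul_pow c ε 2 hne]
  -- `field_simp` looks for the denominator in its normal form `1 - t * ε`
  have hne' : 1 - t * ε ≠ 0 := by rwa [mul_comm]
  field_simp
  ring
end

section
/- Let E and Y be complex Banach spaces, let κ ≥ 1, and let Λ : Y → Y be a bounded linear operator such that id − Λ is invertible with bounded inverse R = (id − Λ)⁻¹ satisfying ‖R‖ ≤ κ. Let A : E → E, B : Y → E, C : E → Y, D : Y → Y be bounded linear operators with ‖A‖, ‖B‖, ‖C‖, ‖D‖ ≤ ε. Then there exist ε₀ > 0 and C₀ > 0 depending only on κ such that if ε ≤ ε₀ there is a bounded linear operator M : E → Y satisfying the fixed-point equation M = R∘(C + D∘M − M∘A − M∘B∘M), with ‖M‖ ≤ C₀ε and ‖M − R∘C‖ ≤ C₀ε². Moreover the graph F = {(u, Mu) : u ∈ E} is invariant under the block operator L(u,v) := (u + Au + Bv, Λv + Cu + Dv): for every u ∈ E, L(u, Mu) =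 (w, Mw) where w = u + Au + B(Mu); hence L restricted to F is conjugate, via u ↦ (u, Mu), to the map u ↦ u + Au + B(Mu) on E. -/
/-!
The graph of `M` is invariant under `L` exactly when `M` solves the Riccati equation
`(1 - Λ) M = C + D M - M A - M B M`; applying `R` makes this a fixed-point problem
`M = Φ M`. When `κ ε ≤ 1/8`, `Φ` maps the closed ball of radius `2 κ ε` in `E →L Y` into
itself and is a contraction there, with Lipschitz constant `2 κ ε (1 + 2 κ ε) ≤ 5/16`, so the
Banach fixed-point theorem produces `M`. Finally `M - R C = R (D M - M A - M B M)` is of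
order `ε²`.
-/

open ContinuousLinearMap Metric Set

theorem ContinuousLinearMap.opNorm_comp_le_of_le {𝕜 F G H : Type*} [NontriviallyNormedField 𝕜]
    [SeminormedAddCommGroup F] [NormedSpace 𝕜 F] [SeminormedAddCommGroup G] [NormedSpace 𝕜 G]
    [SeminormedAddCommGroup H] [NormedSpace 𝕜 H] {f : G →L[𝕜] H} {g : F →L[𝕜] G} {a b : ℝ}
    (hf : ‖f‖ ≤ a) (hg : ‖g‖ ≤ b) : ‖f ∘L g‖ ≤ a * b :=
  (opNorm_comp_le f g).trans (mul_le_mul hf hg (norm_nonneg g) ((norm_nonneg f).trans hf))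

section Riccati

variable {𝕜 E Y : Type*} [NontriviallyNormedField 𝕜]
  [NormedAddCommGroup E] [NormedSpace 𝕜 E] [NormedAddCommGroup Y] [NormedSpace 𝕜 Y]
  {R D : Y →L[𝕜] Y} {A : E →L[𝕜] E} {B : Y →L[𝕜] E} {C M N : E →L[𝕜] Y} {κ ε r : ℝ}

/-- The map `Φ` of the fixed-point problem, `R` standing for `(1 - Λ)⁻¹`. -/
def riccatiMap (R : Y →L[𝕜] Y) (A : E →L[𝕜] E) (B : Y →L[𝕜] E) (C : E →L[𝕜] Y)
    (D : Y →L[𝕜] Y) (M : E →L[𝕜] Y) : E →L[𝕜] Y :=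
  R ∘L (C + D ∘L M - M ∘L A - M ∘L (B ∘L M))

theorem riccatiMap_sub_comp :
    riccatiMap R A B C D M - R ∘L C = R ∘L (D ∘L M - M ∘L A - M ∘L (B ∘L M)) := by
  rw [riccatiMap, ← comp_sub]
  congr 1
  abel

theorem riccatiMap_sub_riccatiMap :
    riccatiMap R A B C D M - riccatiMap R A B C D N =
      R ∘L (D ∘L (M - N) - (M - N) ∘L A - ((M - N) ∘L (B ∘L M) + N ∘L (B ∘L (M - N)))) := by
  simp only [riccatiMap, comp_sub, sub_comp, comp_add]
  abel

theorem norm_riccatiMap_sub_comp_le (hR : ‖R‖ ≤ κ) (hA : ‖A‖ ≤ ε) (hB : ‖B‖ ≤ ε)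
    (hD : ‖D‖ ≤ ε) (hM : ‖M‖ ≤ r) :
    ‖riccatiMap R A B C D M - R ∘L C‖ ≤ κ * (ε * r * (2 + r)) := by
  have hquad : ‖D ∘L M - M ∘L A - M ∘L (B ∘L M)‖ ≤ ε * r + r * ε + r * (ε * r) :=
    norm_sub_le_of_le (norm_sub_le_of_le (opNorm_comp_le_of_le hD hM)
      (opNorm_comp_le_of_le hM hA)) (opNorm_comp_le_of_le hM (opNorm_comp_le_of_le hB hM))
  rw [riccatiMap_sub_comp]
  exact (opNorm_comp_le_of_le hR hquad).trans_eq (by ring)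

theorem norm_riccatiMap_le (hR : ‖R‖ ≤ κ) (hA : ‖A‖ ≤ ε) (hB : ‖B‖ ≤ ε) (hC : ‖C‖ ≤ ε)
    (hD : ‖D‖ ≤ ε) (hM : ‖M‖ ≤ r) :
    ‖riccatiMap R A B C D M‖ ≤ κ * (ε + ε * r * (2 + r)) := by
  rw [← add_sub_cancel (R ∘L C) (riccatiMap R A B C D M), mul_add]
  exact norm_add_le_of_le (opNorm_comp_le_of_le hR hC)
    (norm_riccatiMap_sub_comp_le hR hA hB hD hM)

theorem norm_riccatiMap_sub_riccatiMap_le (hR : ‖R‖ ≤ κ) (hA : ‖A‖ ≤ ε) (hB : ‖B‖ ≤ ε)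
    (hD : ‖D‖ ≤ ε) (hM : ‖M‖ ≤ r) (hN : ‖N‖ ≤ r) :
    ‖riccatiMap R A B C D M - riccatiMap R A B C D N‖ ≤ κ * (2 * ε * (1 + r)) * ‖M - N‖ := by
  have hd : ‖M - N‖ ≤ ‖M - N‖ := le_rfl
  have hlin : ‖D ∘L (M - N) - (M - N) ∘L A - ((M - N) ∘L (B ∘L M) + N ∘L (B ∘L (M - N)))‖ ≤
      ε * ‖M - N‖ + ‖M - N‖ * ε + (‖M - N‖ * (ε * r) + r * (ε * ‖M - N‖)) :=
    norm_sub_le_of_le (norm_sub_le_of_le (opNorm_comp_le_of_le hD hd)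
      (opNorm_comp_le_of_le hd hA)) (norm_add_le_of_le
        (opNorm_comp_le_of_le hd (opNorm_comp_le_of_le hB hM))
        (opNorm_comp_le_of_le hN (opNorm_comp_le_of_le hB hd)))
  rw [riccatiMap_sub_riccatiMap]
  exact (opNorm_comp_le_of_le hR hlin).trans_eq (by ring)

theorem exists_riccatiMap_fixedPoint [CompleteSpace Y] (hR : ‖R‖ ≤ κ) (hA : ‖A‖ ≤ ε)
    (hB : ‖B‖ ≤ ε) (hC : ‖C‖ ≤ ε) (hD : ‖D‖ ≤ ε) (hr : 0 ≤ r)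
    (hball : κ * (ε + ε * r * (2 + r)) ≤ r) (hcontr : κ * (2 * ε * (1 + r)) < 1) :
    ∃ M, ‖M‖ ≤ r ∧ riccatiMap R A B C D M = M := by
  have hK : 0 ≤ κ * (2 * ε * (1 + r)) := by
    have := (norm_nonneg R).trans hR
    have := (norm_nonneg A).trans hA
    positivity
  have hmaps : MapsTo (riccatiMap R A B C D) (closedBall 0 r) (closedBall 0 r) := by
    intro M hM
    rw [mem_closedBall_zero_iff] at hM ⊢
    exact (norm_riccatiMap_le hR hA hB hC hD hM).trans hball
  have hlip : LipschitzOnWith ⟨_, hK⟩ (riccatiMap R A B C D) (closedBall 0 r) := by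
    refine LipschitzOnWith.of_dist_le_mul fun M hM N hN => ?_
    rw [mem_closedBall_zero_iff] at hM hN
    rw [dist_eq_norm, dist_eq_norm]
    exact norm_riccatiMap_sub_riccatiMap_le hR hA hB hD hM hN
  obtain ⟨M, hM, hfix, -⟩ := ContractingWith.exists_fixedPoint' isClosed_closedBall.isComplete
    hmaps ⟨by exact_mod_cast hcontr, hlip.mapsToRestrict hmaps⟩ (mem_closedBall_self hr)
    (edist_ne_top _ _)
  exact ⟨M, mem_closedBall_zero_iff.1 hM, hfix⟩

theorem riccati_graph_invariant {Λ : Y →L[𝕜] Y} (hR : (ContinuousLinearMap.id 𝕜 Y - Λ) ∘L R = ContinuousLinearMap.id 𝕜 Y)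
    (hM : M = riccatiMap R A B C D M) (u : E) :
    Λ (M u) + C u + D (M u) = M (u + A u + B (M u)) := by
  have h := congr(((ContinuousLinearMap.id 𝕜 Y - Λ) ∘L $hM) u)
  simp only [riccatiMap, ← comp_assoc, hR, id_comp, comp_apply, sub_apply, add_apply,
    id_apply] at h
  rw [map_add, map_add]
  linear_combination (norm := module) -h

end Riccati

/-- Abstract perturbation lemma: if `L₀` acts as the identity on `E` and as `Λ` on `Y`
with `id − Λ` invertible (inverse `R`, `‖R‖ ≤ κ`), and `K = (A B; C D)` is a small
perturbation, then the eigenspace `E` deforms to an invariant graph `{(u, Mu)}` where `M`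
solves the fixed point equation `M = R(C + DM − MA − MBM)`, with `‖M‖ = O(ε)` and
`M = RC + O(ε²)`; moreover `L` restricted to the graph is conjugate to
`u ↦ u + Au + B(Mu)` on `E`. -/
theorem graph_perturbation (κ : ℝ) (hκ : 1 ≤ κ) :
    ∃ ε₀ C₀ : ℝ, 0 < ε₀ ∧ 0 < C₀ ∧
      ∀ (E Y : Type) [NormedAddCommGroup E] [NormedSpace ℂ E] [CompleteSpace E]
        [NormedAddCommGroup Y] [NormedSpace ℂ Y] [CompleteSpace Y]
        (Λ R : Y →L[ℂ] Y),
        (ContinuousLinearMap.id ℂ Y - Λ) ∘L R = ContinuousLinearMap.id ℂ Y →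
        R ∘L (ContinuousLinearMap.id ℂ Y - Λ) = ContinuousLinearMap.id ℂ Y →
        ‖R‖ ≤ κ →
        ∀ (ε : ℝ) (A : E →L[ℂ] E) (B : Y →L[ℂ] E) (C : E →L[ℂ] Y) (D : Y →L[ℂ] Y),
          ‖A‖ ≤ ε → ‖B‖ ≤ ε → ‖C‖ ≤ ε → ‖D‖ ≤ ε → ε ≤ ε₀ →
          ∃ M : E →L[ℂ] Y,
            M = R ∘L (C + D ∘L M - M ∘L A - M ∘L (B ∘L M)) ∧
            ‖M‖ ≤ C₀ * ε ∧
            ‖M - R ∘L C‖ ≤ C₀ * ε ^ 2 ∧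
            ∀ u : E, Λ (M u) + C u + D (M u) = M (u + A u + B (M u)) := by
  have hκ0 : 0 < κ := by linarith
  refine ⟨1 / (8 * κ), 5 * κ ^ 2, by positivity, by positivity, ?_⟩
  intro E Y _ _ _ _ _ _ Λ R hRinv _ hR ε A B C D hA hB hC hD hε
  have hε0 : 0 ≤ ε := (norm_nonneg A).trans hA
  have ht0 : 0 ≤ κ * ε := by positivity
  have ht8 : κ * ε ≤ 1 / 8 := by
    rw [le_div_iff₀ (by positivity)] at hε
    linarith
  have ht2 := mul_nonneg ht0 (sub_nonneg.2 ht8)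
  have ht3 := mul_nonneg (mul_nonneg ht0 ht0) (sub_nonneg.2 ht8)
  obtain ⟨M, hMr, hfix⟩ := exists_riccatiMap_fixedPoint (r := 2 * (κ * ε)) hR hA hB hC hD
    (by positivity) (by nlinarith) (by nlinarith)
  refine ⟨M, hfix.symm, ?_, ?_, riccati_graph_invariant hRinv hfix.symm⟩
  · nlinarith [mul_nonneg ht0 (by linarith : 0 ≤ 5 * κ - 2)]
  · rw [← hfix]
    exact (norm_riccatiMap_sub_comp_le hR hA hB hD hMr).trans (by nlinarith)
end

section
/- There exists an absolute constant C > 0 with the following property. Let λ ∈ ℂ satisfy |λ − k| ≥ 1/9 for every integer k. Then for every integer k ≥ 0 and every j ∈ {k−1, k, k+1, −k, −k−2}: (k+1)/(|λ−(k−1)|·|λ−(k+1)|) + (k+1)/(|λ+k+2|·|λ+k|) + 1/|λ−j| ≤ C·(1/(1+|Im λ|) + (1+|Re λ|)/(1+|Im λ|)²). -/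
/-!
Write `t = 1 + |Im λ|`. Since `|λ - m| ≥ max(1/9, |Im λ|) ≥ t/18` for every integer `m`, each
reciprocal distance is `O(1/t)`. In the two product terms the numerator `k + 1` is absorbed by
the triangle inequality on real parts, `k + 1 ≤ |Re λ| + |λ - (k+1)|` and
`k + 1 ≤ |Re λ| + 1 + |λ + k|`, so each of them is `O((1 + |Re λ|)/t² + 1/t)`.
-/

namespace Complex

lemma one_add_abs_im_div_le_norm_sub {z w : ℂ} (h : 1 / 9 ≤ ‖z - w‖) (hw : w.im = 0) :
    (1 + |z.im|) / 18 ≤ ‖z - w‖ := by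
  have him : |z.im| ≤ ‖z - w‖ := by
    simpa [hw] using abs_im_le_norm (z - w)
  linarith

lemma abs_intCast_le_abs_re_add_norm_sub (z : ℂ) (m : ℤ) : |(m : ℝ)| ≤ |z.re| + ‖z - m‖ := by
  have hre : |z.re - m| ≤ ‖z - m‖ := by simpa using abs_re_le_norm (z - m)
  have hsub : |(m : ℝ)| - |z.re| ≤ |z.re - m| := by
    simpa [abs_sub_comm] using abs_sub_abs_le_abs_sub (m : ℝ) z.re
  linarith

end Complex

lemma div_mul_le_div_sq_add_one_div {a c δ N₁ N₂ : ℝ} (hδ : 0 < δ) (ha : 0 ≤ a)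
    (h₁ : δ ≤ N₁) (h₂ : δ ≤ N₂) (hc : c ≤ a + N₂) :
    c / (N₁ * N₂) ≤ a / δ ^ 2 + 1 / δ := by
  have hN₁ : 0 < N₁ := hδ.trans_le h₁
  have hN₂ : 0 < N₂ := hδ.trans_le h₂
  calc c / (N₁ * N₂) ≤ (a + N₂) / (N₁ * N₂) := by gcongr
    _ = a / (N₁ * N₂) + 1 / N₁ := by field_simp
    _ ≤ a / (δ * δ) + 1 / δ := by gcongr
    _ = a / δ ^ 2 + 1 / δ := by rw [sq]

/-- The quantitative bound underlying the resolvent estimate for the linearized Stokes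
operator on the sphere: if `λ ∈ ℂ` stays at distance at least `1/9` from every integer,
then for every `k ≥ 0` and every `j ∈ {k−1, k, k+1, −k, −k−2}`,
`(k+1)/(|λ−(k−1)||λ−(k+1)|) + (k+1)/(|λ+k+2||λ+k|) + 1/|λ−j|`
is bounded by `C (1/(1+|Im λ|) + (1+|Re λ|)/(1+|Im λ|)²)`. -/
theorem resolvent_quantitative_bound :
    ∃ C : ℝ, 0 < C ∧ ∀ lam : ℂ, (∀ k : ℤ, 1 / 9 ≤ ‖lam - k‖) →
      ∀ k : ℕ, ∀ j : ℤ,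
        (j = (k : ℤ) - 1 ∨ j = (k : ℤ) ∨ j = (k : ℤ) + 1 ∨ j = -(k : ℤ) ∨
          j = -(k : ℤ) - 2) →
        ((k : ℝ) + 1) / (‖lam - ((k : ℂ) - 1)‖ * ‖lam - ((k : ℂ) + 1)‖)
          + ((k : ℝ) + 1) / (‖lam + (k : ℂ) + 2‖ * ‖lam + (k : ℂ)‖)
          + 1 / ‖lam - (j : ℂ)‖
        ≤ C * (1 / (1 + |lam.im|) + (1 + |lam.re|) / (1 + |lam.im|) ^ 2) := by
  refine ⟨648, by norm_num, fun lam hlam k j _ => ?_⟩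
  set t := 1 + |lam.im|
  have ht : 0 < t := by positivity
  have hδ : ∀ m : ℤ, t / 18 ≤ ‖lam - m‖ := fun m =>
    Complex.one_add_abs_im_div_le_norm_sub (hlam m) (Complex.intCast_im m)
  have hA : t / 18 ≤ ‖lam - ((k : ℂ) - 1)‖ := by convert hδ (k - 1) using 3; push_cast; rfl
  have hB : t / 18 ≤ ‖lam - ((k : ℂ) + 1)‖ := by convert hδ (k + 1) using 3; push_cast; rfl
  have hD : t / 18 ≤ ‖lam + (k : ℂ) + 2‖ := by convert hδ (-k - 2) using 2; push_cast; ring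
  have hE : t / 18 ≤ ‖lam + (k : ℂ)‖ := by convert hδ (-k) using 2; push_cast; ring
  have hnum₁ : (k : ℝ) + 1 ≤ |lam.re| + ‖lam - ((k : ℂ) + 1)‖ := by
    convert lam.abs_intCast_le_abs_re_add_norm_sub (k + 1) using 3
    · push_cast; exact (abs_of_nonneg (by positivity)).symm
    · push_cast; rfl
  have hnum₂ : (k : ℝ) + 1 ≤ (|lam.re| + 1) + ‖lam + (k : ℂ)‖ := by
    have h := lam.abs_intCast_le_abs_re_add_norm_sub (-k)
    rw [show lam - ((-k : ℤ) : ℂ) = lam + k by push_cast; ring] at h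
    push_cast at h
    rw [abs_neg, Nat.abs_cast] at h
    linarith
  have hT₁ := div_mul_le_div_sq_add_one_div (by positivity) (abs_nonneg _) hA hB hnum₁
  have hT₂ := div_mul_le_div_sq_add_one_div (by positivity) (by positivity) hD hE hnum₂
  have hT₃ : 1 / ‖lam - (j : ℂ)‖ ≤ 1 / (t / 18) := one_div_le_one_div_of_le (by positivity) (hδ j)
  calc _ ≤ |lam.re| / (t / 18) ^ 2 + 1 / (t / 18) + ((|lam.re| + 1) / (t / 18) ^ 2 + 1 / (t / 18))
        + 1 / (t / 18) := by gcongr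
    _ = 648 * (1 / t + (1 + |lam.re|) / t ^ 2) - (594 / t + 324 / t ^ 2) := by
      field_simp; ring
    _ ≤ 648 * (1 / t + (1 + |lam.re|) / t ^ 2) := sub_le_self _ (by positivity)
end

section
/- There exist constants 0 < c₁ ≤ c₂ such that for every x ∈ ℝ³ with |x| ≥ 2, the integral D(x) = ∫_{{y ∈ ℝ³ : |y| > 1}} |x−y|⁻² |y|⁻³ dy satisfies c₁·|x|⁻²·log|x| ≤ D(x) ≤ c₂·|x|⁻²·log|x|. -/
noncomputable section

open MeasureTheory

/-!
Write `R = ‖x‖`, `d = dim E`, `|B| = μ (ball 0 1)`, and integrate in polar coordinates. On the shell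
`2 < ‖y‖ ≤ 2R` one has `‖x - y‖ ≤ 3R`, and `∫ ‖y‖⁻ᵈ` over this shell is `d |B| log R`, which gives
the lower bound. For the upper bound split `{‖y‖ > 1}` into the ball `B(x, R/2)`, where
`‖y‖ ≥ R/2` and `∫ ‖x - y‖¹⁻ᵈ = d |B| R/2`; the rest of the shell `1 < ‖y‖ ≤ 2R`, where
`‖x - y‖ ≥ R/2` and the shell contributes `log 2R`; and `‖y‖ > 2R`, where `‖x - y‖ ≥ ‖y‖/2` and
the tail of `‖y‖^(1 - 2d)` is `O(R¹⁻ᵈ)`. Only the shells contribute the logarithm.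
-/

open Measure Metric Set Module
open scoped ENNReal

local notation "dim" => Module.finrank ℝ

theorem setLIntegral_Ioc_ofReal_inv {a b : ℝ} (ha : 0 < a) (hab : a ≤ b) :
    ∫⁻ r in Ioc a b, ENNReal.ofReal r⁻¹ = ENNReal.ofReal (Real.log b - Real.log a) := by
  have hb : 0 < b := ha.trans_le hab
  have hint : IntegrableOn (fun r : ℝ ↦ r⁻¹) (Ioc a b) := by
    refine (intervalIntegrable_iff_integrableOn_Ioc_of_le hab).1 ?_
    exact intervalIntegral.intervalIntegrable_inv
      (fun r hr ↦ (lt_of_lt_of_le (lt_min ha hb) hr.1).ne') continuousOn_id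
  rw [← ofReal_integral_eq_lintegral_ofReal hint, ← intervalIntegral.integral_of_le hab,
    integral_inv_of_pos ha hb, Real.log_div hb.ne' ha.ne']
  filter_upwards [ae_restrict_mem measurableSet_Ioc] with r hr
  exact inv_nonneg.2 (ha.trans hr.1).le

theorem setLIntegral_Ioi_ofReal_inv_pow_succ {c : ℝ} (hc : 0 < c) {k : ℕ} (hk : 0 < k) :
    ∫⁻ r in Ioi c, ENNReal.ofReal (r ^ (k + 1))⁻¹ = ENNReal.ofReal ((c ^ k)⁻¹ / k) := by
  have hexp : (-(k + 1 : ℕ) : ℝ) < -1 := by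
    have : (1 : ℝ) ≤ k := Nat.one_le_cast.2 hk
    push_cast; linarith
  have hpow : ∀ r ∈ Ioi c, (r ^ (k + 1))⁻¹ = r ^ (-(k + 1 : ℕ) : ℝ) := fun r hr ↦ by
    rw [Real.rpow_neg (hc.trans hr).le, Real.rpow_natCast]
  rw [setLIntegral_congr_fun measurableSet_Ioi fun r hr ↦ by rw [hpow r hr],
    ← ofReal_integral_eq_lintegral_ofReal (integrableOn_Ioi_rpow_of_lt hexp hc),
    integral_Ioi_rpow_of_lt hexp hc]
  · congr 1
    rw [show (-(k + 1 : ℕ) : ℝ) + 1 = -k by push_cast; ring, Real.rpow_neg hc.le,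
      Real.rpow_natCast]
    ring
  · filter_upwards [ae_restrict_mem measurableSet_Ioi] with r hr
    exact Real.rpow_nonneg (hc.trans hr).le _

def interactionKernel {E : Type*} [NormedAddCommGroup E] [NormedSpace ℝ E] (x y : E) : ℝ :=
  (‖x - y‖ ^ (dim E - 1))⁻¹ * (‖y‖ ^ dim E)⁻¹

section

variable {E : Type*} [NormedAddCommGroup E] [NormedSpace ℝ E] [FiniteDimensional ℝ E]
  [MeasurableSpace E] [BorelSpace E] [Nontrivial E] (μ : Measure E) [μ.IsAddHaarMeasure]

theorem lintegral_fun_norm_addHaar {f : ℝ → ℝ≥0∞} (hf : Measurable f) :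
    ∫⁻ x, f ‖x‖ ∂μ =
      dim E * μ (ball 0 1) * ∫⁻ r in Ioi (0 : ℝ), ENNReal.ofReal (r ^ (dim E - 1)) * f r := by
  have hfs : Measurable fun p : sphere (0 : E) 1 × Ioi (0 : ℝ) ↦ f p.2 :=
    hf.comp (measurable_subtype_coe.comp measurable_snd)
  calc ∫⁻ x, f ‖x‖ ∂μ = ∫⁻ x : ({0}ᶜ : Set E), f ‖x.1‖ ∂μ.comap (↑) := by
        rw [lintegral_subtype_comap (measurableSet_singleton _).compl fun x ↦ f ‖x‖,
          restrict_compl_singleton]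
    _ = ∫⁻ p, f p.2 ∂μ.toSphere.prod (volumeIoiPow (dim E - 1)) := by
        simpa using μ.measurePreserving_homeomorphUnitSphereProd.lintegral_comp hfs
    _ = μ.toSphere univ * ∫⁻ r : Ioi (0 : ℝ), f r ∂volumeIoiPow (dim E - 1) := by
        rw [lintegral_prod _ hfs.aemeasurable]
        simp [lintegral_const, mul_comm]
    _ = _ := by
        rw [toSphere_apply_univ, volumeIoiPow]
        exact congrArg _ <| (lintegral_withDensity_eq_lintegral_mul _
          (measurable_subtype_coe.pow_const _).ennreal_ofReal
          (hf.comp measurable_subtype_coe)).trans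
          (lintegral_subtype_comap measurableSet_Ioi fun r ↦ ENNReal.ofReal (r ^ (dim E - 1)) * f r)

theorem setLIntegral_fun_norm_addHaar {s : Set ℝ} (hs : MeasurableSet s) {f : ℝ → ℝ≥0∞}
    (hf : Measurable f) :
    ∫⁻ x in (‖·‖) ⁻¹' s, f ‖x‖ ∂μ =
      dim E * μ (ball 0 1) * ∫⁻ r in s ∩ Ioi 0, ENNReal.ofReal (r ^ (dim E - 1)) * f r := by
  have h := lintegral_fun_norm_addHaar μ (hf.indicator hs)
  simp_rw [← indicator_mul_right s (fun r ↦ ENNReal.ofReal (r ^ (dim E - 1))) f,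
    lintegral_indicator hs, Measure.restrict_restrict hs] at h
  rw [← h, ← lintegral_indicator (measurable_norm hs)]
  exact lintegral_congr fun x ↦ indicator_comp_right (s := s) (fun x : E ↦ ‖x‖) (g := f)

theorem setLIntegral_norm_Ioc_inv_norm_pow_finrank {a b : ℝ} (ha : 0 < a) (hab : a ≤ b) :
    ∫⁻ y in (‖·‖) ⁻¹' Ioc a b, ENNReal.ofReal (‖y‖ ^ dim E)⁻¹ ∂μ =
      dim E * μ (ball 0 1) * ENNReal.ofReal (Real.log b - Real.log a) := by
  rw [setLIntegral_fun_norm_addHaar μ measurableSet_Ioc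
      (f := fun r ↦ ENNReal.ofReal (r ^ dim E)⁻¹) (by fun_prop),
    show Ioc a b ∩ Ioi 0 = Ioc a b from inter_eq_left.2 fun r hr ↦ ha.trans hr.1,
    ← setLIntegral_Ioc_ofReal_inv ha hab]
  refine congrArg _ (setLIntegral_congr_fun measurableSet_Ioc fun r hr ↦ ?_)
  have hr : 0 < r := ha.trans hr.1
  obtain ⟨n, hn⟩ := Nat.exists_eq_add_one.2 (finrank_pos (R := ℝ) (M := E))
  rw [← ENNReal.ofReal_mul (by positivity), hn, Nat.add_sub_cancel]
  congr 1
  field_simp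
  ring

theorem setLIntegral_norm_Ioi_inv_norm_pow_finrank_add {c : ℝ} (hc : 0 < c) {k : ℕ} (hk : 0 < k) :
    ∫⁻ y in (‖·‖) ⁻¹' Ioi c, ENNReal.ofReal (‖y‖ ^ (dim E + k))⁻¹ ∂μ =
      dim E * μ (ball 0 1) * ENNReal.ofReal ((c ^ k)⁻¹ / k) := by
  rw [setLIntegral_fun_norm_addHaar μ measurableSet_Ioi
      (f := fun r ↦ ENNReal.ofReal (r ^ (dim E + k))⁻¹) (by fun_prop),
    show Ioi c ∩ Ioi 0 = Ioi c from inter_eq_left.2 fun r hr ↦ hc.trans hr,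
    ← setLIntegral_Ioi_ofReal_inv_pow_succ hc hk]
  refine congrArg _ (setLIntegral_congr_fun measurableSet_Ioi fun r hr ↦ ?_)
  have hr : 0 < r := hc.trans hr
  obtain ⟨n, hn⟩ := Nat.exists_eq_add_one.2 (finrank_pos (R := ℝ) (M := E))
  rw [← ENNReal.ofReal_mul (by positivity), hn, Nat.add_sub_cancel]
  congr 1
  field_simp
  ring

theorem setLIntegral_ball_inv_norm_sub_pow_finrank_sub_one (x : E) (r : ℝ) :
    ∫⁻ y in ball x r, ENNReal.ofReal (‖x - y‖ ^ (dim E - 1))⁻¹ ∂μ =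
      dim E * μ (ball 0 1) * ENNReal.ofReal r := by
  have htrans := (measurePreserving_sub_right μ x).setLIntegral_comp_preimage_emb
    (Homeomorph.subRight x).measurableEmbedding (fun z ↦ ENNReal.ofReal (‖z‖ ^ (dim E - 1))⁻¹)
    ((‖·‖) ⁻¹' Iio r)
  have hball : (fun y ↦ y - x) ⁻¹' ((‖·‖) ⁻¹' Iio r) = ball x r := by
    ext y; simp [dist_eq_norm]
  simp_rw [hball, norm_sub_rev _ x] at htrans
  rw [htrans, setLIntegral_fun_norm_addHaar μ measurableSet_Iio
      (f := fun r ↦ ENNReal.ofReal (r ^ (dim E - 1))⁻¹) (by fun_prop),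
    show Iio r ∩ Ioi 0 = Ioo 0 r from Iio_inter_Ioi, setLIntegral_congr_fun measurableSet_Ioo
      fun t ht ↦ by rw [← ENNReal.ofReal_mul (pow_nonneg ht.1.le _),
        mul_inv_cancel₀ (pow_pos ht.1 _).ne', ENNReal.ofReal_one]]
  simp

theorem setLIntegral_ball_interactionKernel_le {x : E} (hx : x ≠ 0) :
    ∫⁻ y in ball x (‖x‖ / 2), ENNReal.ofReal (interactionKernel x y) ∂μ ≤
      dim E * μ (ball 0 1) * ENNReal.ofReal (2 ^ (dim E - 1) * (‖x‖ ^ (dim E - 1))⁻¹) := by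
  calc _ ≤ ∫⁻ y in ball x (‖x‖ / 2), ENNReal.ofReal ((‖x‖ / 2) ^ dim E)⁻¹ *
          ENNReal.ofReal (‖x - y‖ ^ (dim E - 1))⁻¹ ∂μ := by
        refine setLIntegral_mono' measurableSet_ball fun y hy ↦ ?_
        rw [mem_ball, dist_eq_norm'] at hy
        have hy : ‖x‖ / 2 ≤ ‖y‖ := by linarith [norm_le_norm_add_norm_sub' x y]
        rw [← ENNReal.ofReal_mul (by positivity), interactionKernel, mul_comm]
        gcongr
    _ = dim E * μ (ball 0 1) * ENNReal.ofReal (((‖x‖ / 2) ^ dim E)⁻¹ * (‖x‖ / 2)) := by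
        rw [lintegral_const_mul' _ _ ENNReal.ofReal_ne_top,
          setLIntegral_ball_inv_norm_sub_pow_finrank_sub_one, mul_left_comm,
          ← ENNReal.ofReal_mul (by positivity)]
    _ = _ := by
        obtain ⟨n, hn⟩ := Nat.exists_eq_add_one.2 (finrank_pos (R := ℝ) (M := E))
        have hx : ‖x‖ ≠ 0 := norm_ne_zero_iff.2 hx
        rw [hn, Nat.add_sub_cancel]
        congr 2
        rw [div_pow]
        field_simp
        ring

theorem setLIntegral_norm_Ioc_diff_ball_interactionKernel_le {x : E} (hx : 1 ≤ 2 * ‖x‖) :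
    ∫⁻ y in (‖·‖) ⁻¹' Ioc 1 (2 * ‖x‖) \ ball x (‖x‖ / 2),
        ENNReal.ofReal (interactionKernel x y) ∂μ ≤
      dim E * μ (ball 0 1) *
        ENNReal.ofReal (2 ^ (dim E - 1) * (‖x‖ ^ (dim E - 1))⁻¹ * Real.log (2 * ‖x‖)) := by
  have hmeas : MeasurableSet ((‖·‖) ⁻¹' Ioc 1 (2 * ‖x‖) : Set E) :=
    measurable_norm measurableSet_Ioc
  calc _ ≤ ∫⁻ y in (‖·‖) ⁻¹' Ioc 1 (2 * ‖x‖) \ ball x (‖x‖ / 2),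
          ENNReal.ofReal ((‖x‖ / 2) ^ (dim E - 1))⁻¹ * ENNReal.ofReal (‖y‖ ^ dim E)⁻¹ ∂μ := by
        refine setLIntegral_mono' (hmeas.diff measurableSet_ball) fun y hy ↦ ?_
        have hy : ‖x‖ / 2 ≤ ‖x - y‖ := by simpa [dist_eq_norm'] using hy.2
        have hx : 0 < ‖x‖ := by linarith
        rw [← ENNReal.ofReal_mul (by positivity), interactionKernel]
        gcongr
    _ ≤ ∫⁻ y in (‖·‖) ⁻¹' Ioc 1 (2 * ‖x‖),
          ENNReal.ofReal ((‖x‖ / 2) ^ (dim E - 1))⁻¹ * ENNReal.ofReal (‖y‖ ^ dim E)⁻¹ ∂μ :=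
        lintegral_mono_set sdiff_subset
    _ = _ := by
        rw [lintegral_const_mul' _ _ ENNReal.ofReal_ne_top,
          setLIntegral_norm_Ioc_inv_norm_pow_finrank μ one_pos hx, mul_left_comm,
          ← ENNReal.ofReal_mul (by positivity), Real.log_one, sub_zero, div_pow, inv_div,
          div_eq_mul_inv]

theorem setLIntegral_norm_Ioi_interactionKernel_le {x : E} (hx : x ≠ 0) (hd : 2 ≤ dim E) :
    ∫⁻ y in (‖·‖) ⁻¹' Ioi (2 * ‖x‖), ENNReal.ofReal (interactionKernel x y) ∂μ ≤
      dim E * μ (ball 0 1) * ENNReal.ofReal (‖x‖ ^ (dim E - 1))⁻¹ := by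
  obtain ⟨n, hn⟩ := Nat.exists_eq_add_one.2 (finrank_pos (R := ℝ) (M := E))
  have hn1 : 1 ≤ n := by omega
  have hx : 0 < ‖x‖ := norm_pos_iff.2 hx
  calc _ ≤ ∫⁻ y in (‖·‖) ⁻¹' Ioi (2 * ‖x‖),
          ENNReal.ofReal (2 ^ n) * ENNReal.ofReal (‖y‖ ^ (dim E + n))⁻¹ ∂μ := by
        refine setLIntegral_mono' (measurable_norm measurableSet_Ioi) fun y hy ↦ ?_
        have hy : 2 * ‖x‖ < ‖y‖ := hy
        have hxy : ‖y‖ / 2 ≤ ‖x - y‖ := by linarith [norm_sub_norm_le y x, norm_sub_rev x y]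
        have hy0 : 0 < ‖y‖ := by linarith
        rw [← ENNReal.ofReal_mul (by positivity), interactionKernel]
        refine ENNReal.ofReal_le_ofReal ?_
        calc (‖x - y‖ ^ (dim E - 1))⁻¹ * (‖y‖ ^ dim E)⁻¹
            ≤ ((‖y‖ / 2) ^ (dim E - 1))⁻¹ * (‖y‖ ^ dim E)⁻¹ := by gcongr
          _ = 2 ^ n * (‖y‖ ^ (dim E + n))⁻¹ := by
            rw [hn, Nat.add_sub_cancel, div_pow]
            field_simp
            ring
    _ = dim E * μ (ball 0 1) * ENNReal.ofReal (2 ^ n * ((2 * ‖x‖) ^ n)⁻¹ / n) := by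
        rw [lintegral_const_mul' _ _ ENNReal.ofReal_ne_top,
          setLIntegral_norm_Ioi_inv_norm_pow_finrank_add μ (by positivity) hn1, mul_left_comm,
          ← ENNReal.ofReal_mul (by positivity), mul_div_assoc]
    _ ≤ _ := by
        rw [hn, Nat.add_sub_cancel, mul_pow, mul_inv, ← mul_assoc, mul_inv_cancel₀ (by positivity),
          one_mul]
        gcongr
        exact div_le_self (by positivity) (Nat.one_le_cast.2 hn1)

theorem le_setLIntegral_interactionKernel {x : E} (hx : 1 ≤ ‖x‖) :
    dim E * μ (ball 0 1) *
        ENNReal.ofReal ((3 ^ (dim E - 1))⁻¹ * (‖x‖ ^ (dim E - 1))⁻¹ * Real.log ‖x‖) ≤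
      ∫⁻ y in {y | 1 < ‖y‖}, ENNReal.ofReal (interactionKernel x y) ∂μ := by
  calc _ = ∫⁻ y in (‖·‖) ⁻¹' Ioc 2 (2 * ‖x‖),
          ENNReal.ofReal ((3 * ‖x‖) ^ (dim E - 1))⁻¹ * ENNReal.ofReal (‖y‖ ^ dim E)⁻¹ ∂μ := by
        rw [lintegral_const_mul' _ _ ENNReal.ofReal_ne_top,
          setLIntegral_norm_Ioc_inv_norm_pow_finrank μ two_pos (by linarith), mul_left_comm,
          ← ENNReal.ofReal_mul (by positivity), Real.log_mul two_ne_zero (by positivity),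
          add_sub_cancel_left, mul_pow, mul_inv]
    _ ≤ ∫⁻ y in (‖·‖) ⁻¹' Ioc 2 (2 * ‖x‖), ENNReal.ofReal (interactionKernel x y) ∂μ := by
        refine setLIntegral_mono_ae (by unfold interactionKernel; fun_prop) ?_
        -- at `y = x` the factor `(‖x - y‖ ^ (dim E - 1))⁻¹` may be the junk value `0⁻¹ = 0`
        filter_upwards [ae_ne μ x] with y hyx hy
        have hxy : ‖x - y‖ ≤ 3 * ‖x‖ := by linarith [norm_sub_le x y, hy.2]
        have hxy0 : 0 < ‖x - y‖ := norm_sub_pos_iff.2 hyx.symm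
        rw [← ENNReal.ofReal_mul (by positivity), interactionKernel]
        gcongr
    _ ≤ _ := lintegral_mono_set fun y hy ↦ one_lt_two.trans hy.1

theorem setLIntegral_interactionKernel_le {x : E} (hx : 2 ≤ ‖x‖) (hd : 2 ≤ dim E) :
    ∫⁻ y in {y | 1 < ‖y‖}, ENNReal.ofReal (interactionKernel x y) ∂μ ≤
      dim E * μ (ball 0 1) *
        ENNReal.ofReal (2 ^ (dim E + 2) * (‖x‖ ^ (dim E - 1))⁻¹ * Real.log ‖x‖) := by
  have hx0 : x ≠ 0 := norm_pos_iff.1 (by linarith)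
  have hcover : {y : E | 1 < ‖y‖} ⊆ ball x (‖x‖ / 2) ∪
      ((‖·‖) ⁻¹' Ioc 1 (2 * ‖x‖) \ ball x (‖x‖ / 2)) ∪ (‖·‖) ⁻¹' Ioi (2 * ‖x‖) := by
    intro y hy
    by_cases hyx : ‖y‖ ≤ 2 * ‖x‖
    · by_cases hb : y ∈ ball x (‖x‖ / 2)
      · exact .inl (.inl hb)
      · exact .inl (.inr ⟨⟨hy, hyx⟩, hb⟩)
    · exact .inr (lt_of_not_ge hyx)
  set P : ℝ := 2 ^ (dim E - 1)
  set Q : ℝ := (‖x‖ ^ (dim E - 1))⁻¹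
  have hsum : P * Q + P * Q * Real.log (2 * ‖x‖) + Q ≤ 2 ^ (dim E + 2) * Q * Real.log ‖x‖ := by
    have hP : 2 ≤ P := le_self_pow₀ one_le_two (by omega)
    have hQ : 0 < Q := by positivity
    have hlog2 : 1 / 2 < Real.log 2 := by linarith [Real.log_two_gt_d9]
    have hlogx : Real.log 2 ≤ Real.log ‖x‖ := Real.log_le_log two_pos hx
    have hpow : (2 : ℝ) ^ (dim E + 2) = 8 * P := by
      rw [show dim E + 2 = dim E - 1 + 3 by omega, pow_add]; ring
    rw [Real.log_mul two_ne_zero (by positivity), hpow]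
    have : P + P * (Real.log 2 + Real.log ‖x‖) + 1 ≤ 8 * P * Real.log ‖x‖ := by nlinarith
    nlinarith
  calc _ ≤ ∫⁻ y in ball x (‖x‖ / 2) ∪
          ((‖·‖) ⁻¹' Ioc 1 (2 * ‖x‖) \ ball x (‖x‖ / 2)) ∪ (‖·‖) ⁻¹' Ioi (2 * ‖x‖),
          ENNReal.ofReal (interactionKernel x y) ∂μ := lintegral_mono_set hcover
    _ ≤ dim E * μ (ball 0 1) * ENNReal.ofReal (P * Q) +
          dim E * μ (ball 0 1) * ENNReal.ofReal (P * Q * Real.log (2 * ‖x‖)) +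
          dim E * μ (ball 0 1) * ENNReal.ofReal Q := by
        refine (lintegral_union_le _ _ _).trans (add_le_add ?_ ?_)
        · refine (lintegral_union_le _ _ _).trans (add_le_add ?_ ?_)
          · exact setLIntegral_ball_interactionKernel_le μ hx0
          · exact setLIntegral_norm_Ioc_diff_ball_interactionKernel_le μ (by linarith)
        · exact setLIntegral_norm_Ioi_interactionKernel_le μ hx0 hd
    _ ≤ _ := by
        have hlog : 0 ≤ Real.log (2 * ‖x‖) := Real.log_nonneg (by linarith)
        rw [← mul_add, ← mul_add, ← ENNReal.ofReal_add (by positivity) (by positivity),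
          ← ENNReal.ofReal_add (by positivity) (by positivity)]
        gcongr

theorem exists_mul_log_le_integral_interactionKernel_le (hd : 2 ≤ dim E) :
    ∃ c₁ c₂ : ℝ, 0 < c₁ ∧ c₁ ≤ c₂ ∧ ∀ x : E, 2 ≤ ‖x‖ →
      c₁ * (‖x‖ ^ (dim E - 1))⁻¹ * Real.log ‖x‖ ≤
          ∫ y in {y | 1 < ‖y‖}, interactionKernel x y ∂μ ∧
        ∫ y in {y | 1 < ‖y‖}, interactionKernel x y ∂μ ≤
          c₂ * (‖x‖ ^ (dim E - 1))⁻¹ * Real.log ‖x‖ := by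
  set V := μ.real (ball 0 1)
  have hV : 0 < V := ENNReal.toReal_pos (measure_ball_pos μ 0 one_pos).ne' measure_ball_lt_top.ne
  have htoReal : ∀ t, 0 ≤ t → (dim E * μ (ball 0 1) * ENNReal.ofReal t).toReal = dim E * V * t :=
    fun t ht ↦ by simp [V, measureReal_def, ENNReal.toReal_ofReal ht]
  have hfin : ∀ t, dim E * μ (ball 0 1) * ENNReal.ofReal t ≠ ⊤ := fun t ↦
    ENNReal.mul_ne_top (ENNReal.mul_ne_top (ENNReal.natCast_ne_top _) measure_ball_lt_top.ne)
      ENNReal.ofReal_ne_top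
  refine ⟨dim E * V * (3 ^ (dim E - 1))⁻¹, dim E * V * 2 ^ (dim E + 2), by positivity, ?_,
    fun x hx ↦ ?_⟩
  · gcongr
    exact (inv_le_one_of_one_le₀ (one_le_pow₀ (by norm_num))).trans (one_le_pow₀ one_le_two)
  have hlog : 0 ≤ Real.log ‖x‖ := Real.log_nonneg (by linarith)
  have hupper := setLIntegral_interactionKernel_le μ hx hd
  rw [integral_eq_lintegral_of_nonneg_ae
    (ae_of_all _ fun y ↦ by unfold interactionKernel; positivity)
    (by unfold interactionKernel; fun_prop)]
  constructor
  · have h := ENNReal.toReal_mono (ne_top_of_le_ne_top (hfin _) hupper)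
      (le_setLIntegral_interactionKernel μ (by linarith : 1 ≤ ‖x‖))
    rw [htoReal _ (by positivity)] at h
    linarith
  · have h := ENNReal.toReal_mono (hfin _) hupper
    rw [htoReal _ (by positivity)] at h
    linarith

end

/-- The integral `D(x) = ∫_{|y|>1} |x−y|⁻² |y|⁻³ dy` behaves like `|x|⁻² log|x|`
for `|x| ≥ 2`. -/
theorem interaction_integral_log_growth :
    ∃ c₁ c₂ : ℝ, 0 < c₁ ∧ c₁ ≤ c₂ ∧ ∀ x : E3, 2 ≤ ‖x‖ →
      c₁ * ‖x‖⁻¹ ^ 2 * Real.log ‖x‖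
          ≤ (∫ y in {y : E3 | 1 < ‖y‖}, (‖x - y‖ ^ 2)⁻¹ * (‖y‖ ^ 3)⁻¹) ∧
      (∫ y in {y : E3 | 1 < ‖y‖}, (‖x - y‖ ^ 2)⁻¹ * (‖y‖ ^ 3)⁻¹)
          ≤ c₂ * ‖x‖⁻¹ ^ 2 * Real.log ‖x‖ := by
  have h := exists_mul_log_le_integral_interactionKernel_le (volume : Measure E3) (by simp)
  simpa [interactionKernel, inv_pow] using h
end
end
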